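/- arXiv:2410.16725 — 3 statements merged into one kernel-verified Lean document; each statement's English description precedes it below -/
import Mathlib

section
/- Let T be a linear relation in a Krein space H with canonical decomposition H = H⁻[⊕]H⁺ and canonical symmetry J, and let λ ∈ ℂ∖{0} with λ ∉ σ_p(JT). Then λ ∈ σ_p(T) if and only if Ker_λ(T⁻(λ)) ≠ {0}, where T⁻(λ) = {(P⁻x, P⁻y) : (x,y) ∈ T, y − λx ∈ H⁻} is a relation in H⁻. -/
open Complex

noncomputable section

variable {H : Type*} [NormedAddCommGroup H] [InnerProductSpace ℂ H] [CompleteSpace H]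

/-- Indefinite inner product `[x,y] = ⟪x, J y⟫`. -/
def kip (J : H →L[ℂ] H) (x y : H) : ℂ := inner ℂ x (J y)

/-- `H⁻ = ker (J + id)`. -/
def negSet (J : H →L[ℂ] H) : Set H := {x | J x = -x}

/-- `H⁺ = ker (J - id)`. -/
def posSet (J : H →L[ℂ] H) : Set H := {x | J x = x}

/-- The canonical projection `P⁻ = (id - J)/2` onto `H⁻`. -/
def Pm (J : H →L[ℂ] H) (x : H) : H := (2⁻¹ : ℂ) • (x - J x)

/-- The canonical projection `P⁺ = (id + J)/2` onto `H⁺`. -/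
def Pp (J : H →L[ℂ] H) (x : H) : H := (2⁻¹ : ℂ) • (x + J x)

/-- `J` is a fundamental symmetry: self-adjoint and an involution. -/
structure IsFundSym (J : H →L[ℂ] H) : Prop where
  symm : ∀ x y : H, (inner ℂ (J x) y : ℂ) = inner ℂ x (J y)
  invol : ∀ x : H, J (J x) = x

def domSet (A : Set (H × H)) : Set H := {x | ∃ y, (x, y) ∈ A}
def ranSet (A : Set (H × H)) : Set H := {y | ∃ x, (x, y) ∈ A}
def mulSet (A : Set (H × H)) : Set H := {y | ((0 : H), y) ∈ A}
def kerl (A : Set (H × H)) (l : ℂ) : Set H := {x | (x, l • x) ∈ A}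
def pointSpec (A : Set (H × H)) : Set ℂ := {l | ∃ x : H, x ≠ 0 ∧ (x, l • x) ∈ A}
/-- The relation `A - l·I`. -/
def shiftRel (A : Set (H × H)) (l : ℂ) : Set (H × H) := {p | ∃ q ∈ A, p = (q.1, q.2 - l • q.1)}
def invRel (A : Set (H × H)) : Set (H × H) := {p | (p.2, p.1) ∈ A}
/-- Composition `A ∘ B` (apply `B` first). -/
def relComp (A B : Set (H × H)) : Set (H × H) := {p | ∃ y, (p.1, y) ∈ B ∧ (y, p.2) ∈ A}
def imageRel (A : Set (H × H)) (M : Set H) : Set H := {y | ∃ x ∈ M, (x, y) ∈ A}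
def setSum (A B : Set H) : Set H := {z | ∃ a ∈ A, ∃ b ∈ B, z = a + b}
/-- The relation `JT = {(x, Jy) : (x,y) ∈ T}`. -/
def JRel (J : H →L[ℂ] H) (A : Set (H × H)) : Set (H × H) := {p | ∃ q ∈ A, p = (q.1, J q.2)}
/-- Krein-space adjoint `T^c`. -/
def adjRel (J : H →L[ℂ] H) (T : Set (H × H)) : Set (H × H) :=
  {q | ∀ p ∈ T, kip J q.2 p.1 = kip J q.1 p.2}
def IsSymRel (J : H →L[ℂ] H) (T : Set (H × H)) : Prop := T ⊆ adjRel J T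
def IsDissipative (J : H →L[ℂ] H) (T : Set (H × H)) : Prop := ∀ p ∈ T, 0 ≤ (kip J p.1 p.2).im
/-- The operator part `T_s = {(x,y) ∈ T : y ⟂ Ind T}`. -/
def opPart (T : Set (H × H)) : Set (H × H) :=
  {p | p ∈ T ∧ ∀ z ∈ mulSet T, (inner ℂ p.2 z : ℂ) = 0}
/-- `‖T_s P⁻‖`: norm of `x ↦ T_s x` as an operator on `H⁻`. -/
def normTsPm (J : H →L[ℂ] H) (T : Set (H × H)) : ℝ :=
  sSup {r | ∃ p ∈ opPart T, p.1 ∈ negSet J ∧ ‖p.1‖ ≤ 1 ∧ r = ‖p.2‖}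
/-- `‖P⁻ T_s P⁻‖`: norm of `x ↦ P⁻(T_s x)` as an operator on `H⁻`. -/
def normPmTsPm (J : H →L[ℂ] H) (T : Set (H × H)) : ℝ :=
  sSup {r | ∃ p ∈ opPart T, p.1 ∈ negSet J ∧ ‖p.1‖ ≤ 1 ∧ r = ‖Pm J p.2‖}
/-- The region `Γ` determined by `m = ‖T_s P⁻‖`, `c = ‖P⁻T_s P⁻‖`. -/
def GammaSet (m c : ℝ) : Set ℂ :=
  {l | l.im ≠ 0 ∧ m < |l.im| ∧
    ‖(if 0 ≤ l.re then (1 : ℂ) else -1) + (c : ℂ) / l‖ < 2 / (1 + (m / |l.im|) ^ 2)}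
/-- `C = (ℂ∖ℝ) ∖ Γ`. -/
def CSet (m c : ℝ) : Set ℂ := {l : ℂ | l.im ≠ 0} \ GammaSet m c

/-- The relation `T⁻(λ) = {(P⁻x, P⁻y) : (x,y) ∈ T, y − λx ∈ H⁻}` in `H⁻`. -/
def TminusRel (J : H →L[ℂ] H) (T : Set (H × H)) (l : ℂ) : Set (H × H) :=
  {p | ∃ q ∈ T, q.2 - l • q.1 ∈ negSet J ∧ p = (Pm J q.1, Pm J q.2)}

/-
Since `P⁻ = (id - J)/2` is linear and fixes `H⁻`, for `(x, y) ∈ T` with `y - λx ∈ H⁻` one gets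
`y - λx = P⁻(y - λx) = P⁻y - λ P⁻x`; so `(P⁻x, λ P⁻x) ∈ T⁻(λ)` forces `y = λx`, and `x ≠ 0` because
`P⁻x ≠ 0`. Conversely an eigenvector `x` of `T` gives `(P⁻x, λ P⁻x) ∈ T⁻(λ)`, and `P⁻x ≠ 0`: otherwise
`Jx = x`, so `x` would be an eigenvector of `JT` for `λ`.
-/

section Pm

variable {E : Type*} [NormedAddCommGroup E] [InnerProductSpace ℂ E] (J : E →L[ℂ] E)

theorem Pm_sub (x y : E) : Pm J (x - y) = Pm J x - Pm J y := by
  rw [Pm, Pm, Pm, map_sub, ← smul_sub, sub_sub_sub_comm]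

theorem Pm_smul (c : ℂ) (x : E) : Pm J (c • x) = c • Pm J x := by
  simp only [Pm, map_smul, ← smul_sub, smul_comm c]

theorem Pm_eq_self_of_mem_negSet {x : E} (hx : x ∈ negSet J) : Pm J x = x := by
  rw [Pm, show J x = -x from hx, sub_neg_eq_add, ← two_smul ℂ, smul_smul,
    inv_mul_cancel₀ two_ne_zero, one_smul]

theorem Pm_eq_zero_iff {x : E} : Pm J x = 0 ↔ J x = x := by
  rw [Pm, smul_eq_zero, sub_eq_zero, eq_comm (a := x)]
  simp

theorem mem_pointSpec_JRel_of_fixed {J : E →L[ℂ] E} {A : Set (E × E)} {l : ℂ} {x : E}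
    (hx : x ≠ 0) (hxA : (x, l • x) ∈ A) (hJx : J x = x) : l ∈ pointSpec (JRel J A) :=
  ⟨x, hx, (x, l • x), hxA, by rw [map_smul, hJx]⟩

theorem Pm_mem_kerl_TminusRel {J : E →L[ℂ] E} {A : Set (E × E)} {l : ℂ} {x : E}
    (hxA : (x, l • x) ∈ A) : (Pm J x, l • Pm J x) ∈ TminusRel J A l :=
  ⟨(x, l • x), hxA, by simp [negSet], by rw [Pm_smul]⟩

theorem exists_mem_kerl_of_mem_kerl_TminusRel {J : E →L[ℂ] E} {A : Set (E × E)} {l : ℂ} {x : E}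
    (hx : (x, l • x) ∈ TminusRel J A l) : ∃ y, (y, l • y) ∈ A ∧ Pm J y = x := by
  obtain ⟨⟨y, z⟩, hyzA, hneg, hxyz⟩ := hx
  obtain ⟨hxy, hxz⟩ := Prod.ext_iff.mp hxyz
  have hzy : z - l • y = 0 := by
    rw [← Pm_eq_self_of_mem_negSet J hneg, Pm_sub, Pm_smul]
    simp only at hxy hxz
    rw [← hxy, ← hxz, sub_self]
  rw [sub_eq_zero] at hzy
  exact ⟨y, hzy ▸ hyzA, hxy.symm⟩

end Pm

theorem statement8_general (J : H →L[ℂ] H)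
    (T : Submodule ℂ (H × H))
    (l : ℂ)
    (hl : l ∉ pointSpec (JRel J (T : Set (H × H)))) :
    l ∈ pointSpec (T : Set (H × H)) ↔
      ∃ x : H, x ≠ 0 ∧ (x, l • x) ∈ TminusRel J (T : Set (H × H)) l := by
  constructor
  · rintro ⟨x, hx, hxT⟩
    have hPx : Pm J x ≠ 0 := fun h =>
      hl (mem_pointSpec_JRel_of_fixed hx hxT ((Pm_eq_zero_iff J).mp h))
    exact ⟨Pm J x, hPx, Pm_mem_kerl_TminusRel hxT⟩
  · rintro ⟨x, hx, hxT⟩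
    obtain ⟨y, hyT, rfl⟩ := exists_mem_kerl_of_mem_kerl_TminusRel hxT
    exact ⟨y, fun hy => hx (by rw [hy, Pm_eq_zero_iff, map_zero]), hyT⟩

/-- Lemma 2.7 d): for `λ ≠ 0` with `λ ∉ σ_p(JT)`, one has
`λ ∈ σ_p(T)` iff `Ker_λ(T⁻(λ)) ≠ {0}`. -/
theorem statement8 (J : H →L[ℂ] H) (hJ : IsFundSym J)
    (T : Submodule ℂ (H × H))
    (l : ℂ) (hl0 : l ≠ 0)
    (hl : l ∉ pointSpec (JRel J (T : Set (H × H)))) :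
    l ∈ pointSpec (T : Set (H × H)) ↔
      ∃ x : H, x ≠ 0 ∧ (x, l • x) ∈ TminusRel J (T : Set (H × H)) l :=
  statement8_general J T l hl
end
end

section
/- Let T be a closed symmetric linear relation in a Krein space H with canonical decomposition H = H⁻[⊕]H⁺ such that H⁻ ⊆ D_T, and let L_T = {x : ∃ y ∈ closure(D_T), (x,y) ∈ T}. Then the following are equivalent: (a) H⁻ ⊆ L_T; (b) T_s x ∈ closure(D_T) for every x ∈ H⁻; (c) T_s x ∈ closure(D_T + Ind T) for every x ∈ H⁻. Moreover, if (a)–(c) hold, then L_T = D_T if and only if T_s x ∈ closure(D_T + Ind T) for every x ∈ H⁺ ∩ D_T. -/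
open Complex

noncomputable section

variable {H : Type*} [NormedAddCommGroup H] [InnerProductSpace ℂ H] [CompleteSpace H]

/-!
Symmetry of `T` makes `Ind T` orthogonal to `J D_T`; since `P⁻x = (x - Jx)/2 ∈ H⁻ ⊆ D_T`, this
upgrades to `Ind T ⟂ D_T`. The orthogonal projection onto `(Ind T)ᗮ` then fixes the values of
`T_s` and maps `D_T + Ind T` onto `D_T`, so `T_s x ∈ closure (D_T + Ind T)` iff
`T_s x ∈ closure D_T`. Since `T x = T_s x + Ind T`, both say `x ∈ L_T`, which gives
(a) ⇔ (b) ⇔ (c). Finally `L_T` is a subspace of `D_T` containing `H⁻`, and `x = P⁻x + P⁺x`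
with `P⁺x ∈ H⁺ ∩ D_T`, so `L_T = D_T` iff `H⁺ ∩ D_T ⊆ L_T`.
-/

open scoped Pointwise

theorem Submodule.mem_closure_of_mem_closure_add_of_mem_orthogonal {𝕜 F : Type*} [RCLike 𝕜]
    [NormedAddCommGroup F] [InnerProductSpace 𝕜 F] (K : Submodule 𝕜 F)
    [K.HasOrthogonalProjection] {A : Set F} (hA : A ⊆ Kᗮ) {y : F}
    (hy : y ∈ closure (A + (K : Set F))) (hyK : y ∈ Kᗮ) : y ∈ closure A := by
  have hf : Continuous fun v => v - K.starProjection v := by fun_prop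
  have hmaps : Set.MapsTo (fun v => v - K.starProjection v) (A + (K : Set F)) A := by
    rintro _ ⟨a, ha, b, hb, rfl⟩
    simpa [(K.starProjection_apply_eq_zero_iff).2 (hA ha), starProjection_eq_self_iff.2 hb]
      using ha
  simpa [(K.starProjection_apply_eq_zero_iff).2 hyK] using map_mem_closure hf hy hmaps

section KreinSpace

variable {E : Type*} [NormedAddCommGroup E]

theorem setSum_eq_add (A B : Set E) : setSum A B = A + B := by
  ext z
  simp only [setSum, Set.mem_add, eq_comm]
  rfl

theorem add_mem_closure_setSum {A B : Set E} {a b : E} (ha : a ∈ closure A) (hb : b ∈ B) :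
    a + b ∈ closure (setSum A B) :=
  map_mem_closure₂ continuous_add ha (subset_closure hb) fun a ha b hb => ⟨a, ha, b, hb, rfl⟩

variable [InnerProductSpace ℂ E]

theorem Pm_mem_negSet {J : E →L[ℂ] E} (hJ : ∀ x, J (J x) = x) (x : E) : Pm J x ∈ negSet J := by
  show J (Pm J x) = -Pm J x
  rw [Pm, map_smul, map_sub, hJ, ← smul_neg, neg_sub]

theorem Pp_mem_posSet {J : E →L[ℂ] E} (hJ : ∀ x, J (J x) = x) (x : E) : Pp J x ∈ posSet J := by
  show J (Pp J x) = Pp J x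
  rw [Pp, map_smul, map_add, hJ, add_comm]

theorem Pm_add_Pp (J : E →L[ℂ] E) (x : E) : Pm J x + Pp J x = x := by
  rw [Pm, Pp, ← smul_add, sub_add_add_cancel, ← two_smul ℂ x, smul_smul]
  norm_num

variable {T : Submodule ℂ (E × E)}

def indSubmodule (T : Submodule ℂ (E × E)) : Submodule ℂ E := T.comap (LinearMap.inr ℂ E E)

theorem coe_indSubmodule : (indSubmodule T : Set E) = mulSet T := rfl

theorem hasOrthogonalProjection_indSubmodule [CompleteSpace E]
    (hT : IsClosed (T : Set (E × E))) : (indSubmodule T).HasOrthogonalProjection :=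
  have : CompleteSpace (indSubmodule T) :=
    (hT.preimage (Continuous.prodMk_right 0)).completeSpace_coe
  inferInstance

theorem sub_mem_mulSet {x y y' : E} (hy : (x, y) ∈ T) (hy' : (x, y') ∈ T) :
    y - y' ∈ mulSet T := by
  simpa [mulSet] using T.sub_mem hy hy'

theorem add_mem_domSet {x x' : E} (hx : x ∈ domSet T) (hx' : x' ∈ domSet T) :
    x + x' ∈ domSet T :=
  let ⟨y, hy⟩ := hx; let ⟨y', hy'⟩ := hx'; ⟨y + y', T.add_mem hy hy'⟩

theorem sub_mem_domSet {x x' : E} (hx : x ∈ domSet T) (hx' : x' ∈ domSet T) :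
    x - x' ∈ domSet T :=
  let ⟨y, hy⟩ := hx; let ⟨y', hy'⟩ := hx'; ⟨y - y', T.sub_mem hy hy'⟩

theorem add_mem_closure_domSet {x x' : E} (hx : x ∈ closure (domSet T))
    (hx' : x' ∈ closure (domSet T)) : x + x' ∈ closure (domSet T) :=
  map_mem_closure₂ continuous_add hx hx' fun _ ha _ hb => add_mem_domSet ha hb

theorem snd_mem_orthogonal_indSubmodule {p : E × E} (hp : p ∈ opPart T) :
    p.2 ∈ (indSubmodule T)ᗮ :=
  ((indSubmodule T).mem_orthogonal' _).2 fun z hz => hp.2 z hz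

theorem exists_mem_opPart [(indSubmodule T).HasOrthogonalProjection] {x : E}
    (hx : x ∈ domSet T) : ∃ y, (x, y) ∈ opPart T := by
  set K := indSubmodule T
  obtain ⟨y, hy⟩ := hx
  have hKy : ((0 : E), K.starProjection y) ∈ T := (K.orthogonalProjectionOnto y).2
  refine ⟨y - K.starProjection y, by simpa using T.sub_mem hy hKy, fun z hz => ?_⟩
  exact (K.mem_orthogonal' _).1 (K.sub_starProjection_mem_orthogonal y) z hz

/-- The set `L_T = T⁻¹(closure D_T)`. -/
def lSet (T : Submodule ℂ (E × E)) : Set E := {x | ∃ y ∈ closure (domSet T), (x, y) ∈ T}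

theorem lSet_subset_domSet : lSet T ⊆ domSet T := fun _ ⟨y, _, hy⟩ => ⟨y, hy⟩

theorem add_mem_lSet {x x' : E} (hx : x ∈ lSet T) (hx' : x' ∈ lSet T) : x + x' ∈ lSet T :=
  let ⟨y, hyD, hy⟩ := hx
  let ⟨y', hyD', hy'⟩ := hx'
  ⟨y + y', add_mem_closure_domSet hyD hyD', T.add_mem hy hy'⟩

theorem snd_mem_closure_setSum_of_fst_mem_lSet {p : E × E} (hp : p ∈ T) (hx : p.1 ∈ lSet T) :
    p.2 ∈ closure (setSum (domSet T) (mulSet T)) := by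
  obtain ⟨y, hyD, hy⟩ := hx
  simpa using add_mem_closure_setSum hyD (sub_mem_mulSet hp hy)

theorem mem_closure_domSet_iff_mem_closure_setSum [(indSubmodule T).HasOrthogonalProjection]
    (hD : domSet T ⊆ ((indSubmodule T)ᗮ : Set E)) {p : E × E} (hp : p ∈ opPart T) :
    p.2 ∈ closure (domSet T) ↔ p.2 ∈ closure (setSum (domSet T) (mulSet T)) := by
  refine ⟨fun h => closure_mono (fun d hd => ?_) h, fun h => ?_⟩
  · exact ⟨d, hd, 0, T.zero_mem, (add_zero d).symm⟩
  rw [setSum_eq_add, ← coe_indSubmodule] at h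
  exact (indSubmodule T).mem_closure_of_mem_closure_add_of_mem_orthogonal hD h
    (snd_mem_orthogonal_indSubmodule hp)

theorem mem_closure_domSet_iff_fst_mem_lSet [(indSubmodule T).HasOrthogonalProjection]
    (hD : domSet T ⊆ ((indSubmodule T)ᗮ : Set E)) {p : E × E} (hp : p ∈ opPart T) :
    p.2 ∈ closure (domSet T) ↔ p.1 ∈ lSet T :=
  ⟨fun h => ⟨p.2, h, hp.1⟩, fun h => (mem_closure_domSet_iff_mem_closure_setSum hD hp).2
    (snd_mem_closure_setSum_of_fst_mem_lSet hp.1 h)⟩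

theorem domSet_subset_orthogonal_indSubmodule {J : E →L[ℂ] E} (hJ : ∀ x, J (J x) = x)
    (hT : IsSymRel J T) (hdom : negSet J ⊆ domSet T) :
    domSet T ⊆ ((indSubmodule T)ᗮ : Set E) := by
  intro x hx
  rw [SetLike.mem_coe, Submodule.mem_orthogonal]
  intro z hz
  have hzJ : ∀ w ∈ domSet T, inner ℂ z (J w) = 0 := by
    rintro w ⟨y, hy⟩
    simpa [kip] using hT hz (w, y) hy
  have hPm := hzJ _ (hdom (Pm_mem_negSet hJ x))
  rw [Pm_mem_negSet hJ x, inner_neg_right, neg_eq_zero, Pm, inner_smul_right, inner_sub_right,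
    hzJ x hx] at hPm
  simpa using hPm

end KreinSpace

/-- Proposition 5.1: with `L_T = T⁻¹(closure D_T)`, the conditions
(a) `H⁻ ⊆ L_T`, (b) `T_s(H⁻) ⊆ closure D_T`, (c) `T_s(H⁻) ⊆ closure (D_T + Ind T)`
are equivalent; and if they hold then `L_T = D_T` iff
`T_s(H⁺ ∩ D_T) ⊆ closure (D_T + Ind T)`. -/
theorem statement16 (J : H →L[ℂ] H) (hJ : IsFundSym J)
    (T : Submodule ℂ (H × H))
    (hTclosed : IsClosed (T : Set (H × H)))
    (hTsym : IsSymRel J (T : Set (H × H)))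
    (hdom : negSet J ⊆ domSet (T : Set (H × H))) :
    ((negSet J ⊆ {x : H | ∃ y ∈ closure (domSet (T : Set (H × H))), (x, y) ∈ T}) ↔
      (∀ p ∈ opPart (T : Set (H × H)), p.1 ∈ negSet J →
        p.2 ∈ closure (domSet (T : Set (H × H))))) ∧
    ((∀ p ∈ opPart (T : Set (H × H)), p.1 ∈ negSet J →
        p.2 ∈ closure (domSet (T : Set (H × H)))) ↔
      (∀ p ∈ opPart (T : Set (H × H)), p.1 ∈ negSet J →
        p.2 ∈ closure (setSum (domSet (T : Set (H × H))) (mulSet (T : Set (H × H)))))) ∧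
    ((negSet J ⊆ {x : H | ∃ y ∈ closure (domSet (T : Set (H × H))), (x, y) ∈ T}) →
      (({x : H | ∃ y ∈ closure (domSet (T : Set (H × H))), (x, y) ∈ T}
          = domSet (T : Set (H × H))) ↔
        (∀ p ∈ opPart (T : Set (H × H)), p.1 ∈ posSet J →
          p.2 ∈ closure (setSum (domSet (T : Set (H × H))) (mulSet (T : Set (H × H))))))) := by
  have := hasOrthogonalProjection_indSubmodule hTclosed
  have hD := domSet_subset_orthogonal_indSubmodule hJ.invol hTsym hdom
  change (negSet J ⊆ lSet T ↔ _) ∧ _ ∧ (negSet J ⊆ lSet T → (lSet T = domSet T ↔ _))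
  refine ⟨⟨fun ha p hp hx => (mem_closure_domSet_iff_fst_mem_lSet hD hp).2 (ha hx),
      fun hb x hx => ?_⟩,
    forall₃_congr fun p hp _ => mem_closure_domSet_iff_mem_closure_setSum hD hp,
    fun ha => ⟨fun hLD p hp _ => ?_, fun hc => lSet_subset_domSet.antisymm fun x hx => ?_⟩⟩
  · obtain ⟨y, hy⟩ := exists_mem_opPart (hdom hx)
    exact (mem_closure_domSet_iff_fst_mem_lSet hD hy).1 (hb _ hy hx)
  · exact snd_mem_closure_setSum_of_fst_mem_lSet hp.1 (hLD ▸ ⟨p.2, hp.1⟩)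
  · have hPm := Pm_mem_negSet hJ.invol x
    have hPpD : Pp J x ∈ domSet T := by
      rw [eq_sub_of_add_eq' (Pm_add_Pp J x)]
      exact sub_mem_domSet hx (hdom hPm)
    obtain ⟨y, hy⟩ := exists_mem_opPart hPpD
    have hPpL : Pp J x ∈ lSet T := (mem_closure_domSet_iff_fst_mem_lSet hD hy).1
      ((mem_closure_domSet_iff_mem_closure_setSum hD hy).2 (hc _ hy (Pp_mem_posSet hJ.invol x)))
    simpa [Pm_add_Pp] using add_mem_lSet (ha hPm) hPpL
end
end

section
/- Let T be a closed linear relation in a Krein space H with canonical decomposition H = H⁻[⊕]H⁺ and canonical symmetry J, and fix λ ∈ ℂ∖{0} such that H⁻ + R_{JT^c − λ̄I} is a closed subspace. Then R_{T−λI} is closed if and only if H⁻ ∩ R_{T^c − λ̄I} is closed; if in addition H⁺ + R_{JT + λI} is closed, then R_{T−λI} is closed if and only if H⁺ ∩ R_{T−λI} is closed. -/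
open Complex

noncomputable section

variable {H : Type*} [NormedAddCommGroup H] [InnerProductSpace ℂ H] [CompleteSpace H]

/-! Let `G` be the graph of `T` inside the Hilbert sum `H ⊕ H`. Then `R_{T−λ}` is the image of `G`
under `(x, y) ↦ y − λx`, and `R_{T^c−λ̄} = J(B Gᗮ)` with `B (a, b) = a + λ̄b`. Both maps are
surjective and the kernel of `B` is the orthogonal complement of the kernel of the first, so by the
closed range theorem `R_{T−λ}` is closed iff `B Gᗮ` is. Modulo `H⁻`, `R_{T^c−λ̄}` agrees with
`R_{JT^c−λ̄}`, and modulo `H⁺`, `R_{T−λ}` agrees with `R_{JT+λ}` up to sign. Finally, if `M` is a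
closed subspace and `R` the range of a bounded operator with `M + R` closed, then `R` is closed
as soon as `M ∩ R` is: project onto `Mᗮ` and use the open mapping theorem. -/

open Function ContinuousLinearMap Filter Topology
open scoped InnerProductSpace Pointwise

theorem Submodule.add_image_eq_add_image {R X E : Type*} [Ring R] [AddCommGroup E] [Module R E]
    (M : Submodule R E) {s : Set X} {f g : X → E} (h : ∀ x ∈ s, f x - g x ∈ M) :
    (M : Set E) + f '' s = (M : Set E) + g '' s := by
  ext z
  simp only [Set.mem_add, Set.mem_image]
  constructor
  · rintro ⟨m, hm, _, ⟨x, hx, rfl⟩, rfl⟩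
    exact ⟨m + (f x - g x), M.add_mem hm (h x hx), g x, ⟨x, hx, rfl⟩, by abel⟩
  · rintro ⟨m, hm, _, ⟨x, hx, rfl⟩, rfl⟩
    exact ⟨m - (f x - g x), M.sub_mem hm (h x hx), f x, ⟨x, hx, rfl⟩, by abel⟩

section Banach

variable {𝕜 : Type*} [NontriviallyNormedField 𝕜]
  {E F G : Type*} [NormedAddCommGroup E] [NormedSpace 𝕜 E]
  [NormedAddCommGroup F] [NormedSpace 𝕜 F] [NormedAddCommGroup G] [NormedSpace 𝕜 G]

theorem ContinuousLinearMap.image_eq_range_comp_subtypeL (A : E →L[𝕜] F) (V : Submodule 𝕜 E) :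
    A '' V = Set.range (A ∘L V.subtypeL) := by
  rw [coe_comp, Set.range_comp, Submodule.coe_subtypeL, Submodule.coe_subtype, Subtype.range_coe]

/-- By the open mapping theorem a surjection of Banach spaces is a quotient map. -/
theorem isClosed_image_iff_isClosed_sup_ker [CompleteSpace E] [CompleteSpace F] (B : E →L[𝕜] F)
    (hB : Surjective B) (N : Submodule 𝕜 E) :
    IsClosed (B '' N) ↔ IsClosed ((N ⊔ (B : E →ₗ[𝕜] F).ker : Submodule 𝕜 E) : Set E) := by
  rw [← Submodule.comap_map_eq, Submodule.comap_coe, Submodule.map_coe]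
  exact ((B.isOpenMap hB).isQuotientMap B.continuous hB).isCoinducing.isClosed_preimage.symm

theorem isClosed_range_of_isClosed_range_comp_of_isClosed_inter [CompleteSpace F] [CompleteSpace G]
    (Q : E →L[𝕜] G) (A : F →L[𝕜] E) (hQA : IsClosed (Set.range (Q ∘L A)))
    (hinter : IsClosed (((Q : E →ₗ[𝕜] G).ker : Set E) ∩ Set.range A)) :
    IsClosed (Set.range A) := by
  set B := Q ∘L A
  have : CompleteSpace (B : F →ₗ[𝕜] G).range :=
    IsClosed.completeSpace_coe (hs := by rwa [LinearMap.coe_range])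
  obtain ⟨C, -, hC⟩ := B.rangeRestrict.exists_preimage_norm_le B.surjective_rangeRestrict
  refine isClosed_of_closure_subset fun y hy => ?_
  obtain ⟨u, hu, hlim⟩ := mem_closure_iff_seq_limit.mp hy
  choose x hx using hu
  obtain rfl : u = fun n => A (x n) := funext fun n => (hx n).symm
  obtain ⟨z, hz⟩ : Q y ∈ Set.range B :=
    hQA.mem_of_tendsto ((Q.continuous.tendsto y).comp hlim) (.of_forall fun n => ⟨x n, rfl⟩)
  -- corrections `p n → 0` with `B (p n) = B (x n - z)` push `A (x n - z)` into `ker Q`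
  choose p hpB hpC using fun n => hC (B.rangeRestrict (x n - z))
  have hBlim : Tendsto (fun n => B (x n - z)) atTop (𝓝 0) := by
    have := ((Q.continuous.tendsto y).comp hlim).sub_const (Q y)
    simpa [B, ← hz] using this
  have hp : Tendsto p atTop (𝓝 0) := by
    refine squeeze_zero_norm hpC ?_
    have := hBlim.norm.const_mul C
    rwa [norm_zero, mul_zero] at this
  have hmem : ∀ n, A (x n - z - p n) ∈ ((Q : E →ₗ[𝕜] G).ker : Set E) ∩ Set.range A := by
    intro n
    refine ⟨?_, _, rfl⟩
    have hBp : Q (A (p n)) = Q (A (x n - z)) := congrArg Subtype.val (hpB n)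
    rw [SetLike.mem_coe, LinearMap.mem_ker, coe_coe, map_sub, map_sub, hBp, sub_self]
  have hlim' : Tendsto (fun n => A (x n - z - p n)) atTop (𝓝 (y - A z)) := by
    simpa using (hlim.sub_const (A z)).sub ((A.continuous.tendsto 0).comp hp)
  obtain ⟨v, hv⟩ := (hinter.mem_of_tendsto hlim' (.of_forall hmem)).2
  exact ⟨v + z, by rw [map_add, hv, sub_add_cancel]⟩

end Banach

section Hilbert

variable {𝕜 : Type*} [RCLike 𝕜]
  {E F G : Type*} [NormedAddCommGroup E] [InnerProductSpace 𝕜 E]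
  [NormedAddCommGroup F] [InnerProductSpace 𝕜 F] [NormedAddCommGroup G] [InnerProductSpace 𝕜 G]

theorem Submodule.orthogonalProjectionOnto_surjective (V : Submodule 𝕜 E)
    [V.HasOrthogonalProjection] : Surjective V.orthogonalProjectionOnto := fun v =>
  ⟨v, Submodule.orthogonalProjectionOnto_mem_subspace_eq_self v⟩

theorem ContinuousLinearEquiv.surjective_adjoint [CompleteSpace E] [CompleteSpace F]
    (e : E ≃L[𝕜] F) : Surjective (adjoint (e : E →L[𝕜] F)) := by
  refine RightInverse.surjective (g := adjoint (e.symm : F →L[𝕜] E)) fun x => ?_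
  change (adjoint (e : E →L[𝕜] F) ∘L adjoint (e.symm : F →L[𝕜] E)) x = x
  rw [← adjoint_comp, e.coe_symm_comp_coe, adjoint_id, id_apply]

/-- Closed range theorem: `A` factors as an isomorphism `(ker A)ᗮ ≃ range A` between
orthogonal projection and inclusion, hence so does its adjoint. -/
theorem range_adjoint_eq_orthogonal_ker [CompleteSpace E] [CompleteSpace F] (A : E →L[𝕜] F)
    (hA : IsClosed (Set.range A)) :
    (adjoint A : F →ₗ[𝕜] E).range = (A : E →ₗ[𝕜] F).kerᗮ := by
  set K := (A : E →ₗ[𝕜] F).ker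
  set R := (A : E →ₗ[𝕜] F).range
  have : CompleteSpace K := A.isClosed_ker.completeSpace_coe
  have : CompleteSpace R := IsClosed.completeSpace_coe (hs := by rwa [LinearMap.coe_range])
  have hAP : ∀ x, A (Kᗮ.orthogonalProjectionOnto x) = A x := by
    intro x
    have hx : x - Kᗮ.starProjection x ∈ K := by
      simpa only [Submodule.orthogonal_orthogonal] using
        Submodule.sub_starProjection_mem_orthogonal (K := Kᗮ) x
    rw [eq_comm, ← sub_eq_zero, ← map_sub]
    exact hx
  set A₁ : Kᗮ →L[𝕜] R := (A ∘L Kᗮ.subtypeL).codRestrict R (fun x => LinearMap.mem_range_self _ _)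
  have hinj : (A₁ : Kᗮ →ₗ[𝕜] R).ker = ⊥ := by
    rw [LinearMap.ker_eq_bot']
    intro x hx
    have hxK : (x : E) ∈ K := congrArg Subtype.val hx
    exact Subtype.ext
      (Submodule.inf_orthogonal_eq_bot K ▸ ⟨hxK, x.2⟩ : (x : E) ∈ (⊥ : Submodule 𝕜 E))
  have hsurj : (A₁ : Kᗮ →ₗ[𝕜] R).range = ⊤ := by
    rw [LinearMap.range_eq_top]
    rintro ⟨_, x, rfl⟩
    exact ⟨Kᗮ.orthogonalProjectionOnto x, Subtype.ext (hAP x)⟩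
  set e := ContinuousLinearEquiv.ofBijective A₁ hinj hsurj
  have hfac : A = R.subtypeL ∘L (e : Kᗮ →L[𝕜] R) ∘L Kᗮ.orthogonalProjectionOnto := by
    ext x; exact (hAP x).symm
  rw [hfac, adjoint_comp, adjoint_comp, Submodule.adjoint_subtypeL,
    Submodule.adjoint_orthogonalProjectionOnto]
  ext x
  simp only [LinearMap.mem_range, coe_coe]
  refine ⟨?_, fun hx => ?_⟩
  · rintro ⟨y, rfl⟩
    exact Subtype.property _
  · obtain ⟨z, hz⟩ := e.surjective_adjoint ⟨x, hx⟩
    obtain ⟨y, rfl⟩ := R.orthogonalProjectionOnto_surjective z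
    exact ⟨y, congrArg Subtype.val hz⟩

theorem isClosed_range_adjoint [CompleteSpace E] [CompleteSpace F] (A : E →L[𝕜] F)
    (hA : IsClosed (Set.range A)) : IsClosed (Set.range (adjoint A)) := by
  have := congrArg (fun S : Submodule 𝕜 E => (S : Set E)) (range_adjoint_eq_orthogonal_ker A hA)
  simp only [LinearMap.coe_range, coe_coe] at this
  exact this ▸ Submodule.isClosed_orthogonal _

theorem isClosed_range_adjoint_iff [CompleteSpace E] [CompleteSpace F] (A : E →L[𝕜] F) :
    IsClosed (Set.range (adjoint A)) ↔ IsClosed (Set.range A) :=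
  ⟨fun h => adjoint_adjoint A ▸ isClosed_range_adjoint _ h, isClosed_range_adjoint A⟩

theorem isClosed_image_iff_isClosed_orthogonal_sup_range_adjoint [CompleteSpace E]
    [CompleteSpace F] (V : Submodule 𝕜 E) (hV : IsClosed (V : Set E)) (A : E →L[𝕜] F) :
    IsClosed (A '' V) ↔
      IsClosed ((Vᗮ ⊔ (adjoint A : F →ₗ[𝕜] E).range : Submodule 𝕜 E) : Set E) := by
  have : CompleteSpace V := hV.completeSpace_coe
  rw [A.image_eq_range_comp_subtypeL, ← isClosed_range_adjoint_iff, adjoint_comp,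
    Submodule.adjoint_subtypeL, coe_comp, Set.range_comp]
  refine (isClosed_image_iff_isClosed_sup_ker _ V.orthogonalProjectionOnto_surjective
    (adjoint A : F →ₗ[𝕜] E).range).trans ?_
  rw [Submodule.ker_orthogonalProjectionOnto, sup_comm]

theorem isClosed_image_iff_isClosed_image_orthogonal [CompleteSpace E] [CompleteSpace F]
    [CompleteSpace G] (V : Submodule 𝕜 E) (hV : IsClosed (V : Set E)) (A : E →L[𝕜] F)
    (hA : IsClosed (Set.range A)) (B : E →L[𝕜] G) (hB : Surjective B)
    (hAB : (B : E →ₗ[𝕜] G).ker = (A : E →ₗ[𝕜] F).kerᗮ) :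
    IsClosed (A '' V) ↔ IsClosed (B '' Vᗮ) := by
  rw [isClosed_image_iff_isClosed_orthogonal_sup_range_adjoint V hV,
    isClosed_image_iff_isClosed_sup_ker B hB, range_adjoint_eq_orthogonal_ker A hA, hAB]

theorem isClosed_image_iff_isClosed_inter_of_isClosed_add [CompleteSpace E] {X : Type*}
    [NormedAddCommGroup X] [NormedSpace 𝕜 X] [CompleteSpace X] (M : Submodule 𝕜 E)
    (hM : IsClosed (M : Set E)) (V : Submodule 𝕜 X) (hV : IsClosed (V : Set X)) (A : X →L[𝕜] E)
    (hsum : IsClosed ((M : Set E) + A '' V)) :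
    IsClosed (A '' V) ↔ IsClosed ((M : Set E) ∩ A '' V) := by
  refine ⟨hM.inter, fun hinter => ?_⟩
  have : CompleteSpace V := hV.completeSpace_coe
  have : CompleteSpace M := hM.completeSpace_coe
  have hkerQ : (Mᗮ.orthogonalProjectionOnto : E →ₗ[𝕜] Mᗮ).ker = M := by
    rw [Submodule.ker_orthogonalProjectionOnto, Submodule.orthogonal_orthogonal]
  rw [A.image_eq_range_comp_subtypeL] at hsum hinter ⊢
  refine isClosed_range_of_isClosed_range_comp_of_isClosed_inter Mᗮ.orthogonalProjectionOnto _
    ?_ (by rwa [hkerQ])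
  rw [coe_comp, Set.range_comp]
  refine (isClosed_image_iff_isClosed_sup_ker _ Mᗮ.orthogonalProjectionOnto_surjective
    (A ∘L V.subtypeL : V →ₗ[𝕜] E).range).mpr ?_
  rwa [hkerQ, Submodule.coe_sup, add_comm, LinearMap.coe_range]

end Hilbert

section Krein

variable {E : Type*} [NormedAddCommGroup E] [InnerProductSpace ℂ E]

theorem IsFundSym.isClosed_image_iff {J : E →L[ℂ] E} (hJ : IsFundSym J) {s : Set E} :
    IsClosed (J '' s) ↔ IsClosed s :=
  (ContinuousLinearEquiv.equivOfInverse J J hJ.invol hJ.invol).isClosed_image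

def negSubspace (J : E →L[ℂ] E) : Submodule ℂ E := ((J + 1 : E →L[ℂ] E) : E →ₗ[ℂ] E).ker

def posSubspace (J : E →L[ℂ] E) : Submodule ℂ E := ((J - 1 : E →L[ℂ] E) : E →ₗ[ℂ] E).ker

theorem coe_negSubspace (J : E →L[ℂ] E) : (negSubspace J : Set E) = negSet J := by
  ext x
  simp [negSubspace, negSet, eq_neg_iff_add_eq_zero]

theorem coe_posSubspace (J : E →L[ℂ] E) : (posSubspace J : Set E) = posSet J := by
  ext x
  simp [posSubspace, posSet, sub_eq_zero]

theorem isClosed_negSubspace (J : E →L[ℂ] E) : IsClosed (negSubspace J : Set E) :=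
  (J + 1).isClosed_ker

theorem isClosed_posSubspace (J : E →L[ℂ] E) : IsClosed (posSubspace J : Set E) :=
  (J - 1).isClosed_ker

theorem IsFundSym.sub_map_mem_negSubspace {J : E →L[ℂ] E} (hJ : IsFundSym J) (x : E) :
    x - J x ∈ negSubspace J := by
  simp [negSubspace, hJ.invol]

theorem IsFundSym.add_map_mem_posSubspace {J : E →L[ℂ] E} (hJ : IsFundSym J) (x : E) :
    J x + x ∈ posSubspace J := by
  simp [posSubspace, hJ.invol, add_comm]

theorem setSum_eq_add_s18 {X : Type*} [NormedAddCommGroup X] (s t : Set X) : setSum s t = s + t := by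
  ext z
  simp [setSum, Set.mem_add, eq_comm]

theorem ranSet_shiftRel (S : Set (E × E)) (c : ℂ) :
    ranSet (shiftRel S c) = (fun p => p.2 - c • p.1) '' S := by
  ext y
  simp [ranSet, shiftRel, Prod.ext_iff, eq_comm]

theorem JRel_eq_image (J : E →L[ℂ] E) (S : Set (E × E)) :
    JRel J S = (fun p => (p.1, J p.2)) '' S := by
  ext p
  simp [JRel, eq_comm]

/-- `T` as a subspace of the Hilbert sum `E ⊕ E` (the product `E × E` carries the sup norm and
no inner product). -/
def hilbertGraph (T : Submodule ℂ (E × E)) : Submodule ℂ (WithLp 2 (E × E)) :=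
  T.comap (WithLp.linearEquiv 2 ℂ (E × E)).toLinearMap

theorem isClosed_hilbertGraph {T : Submodule ℂ (E × E)} (hT : IsClosed (T : Set (E × E))) :
    IsClosed (hilbertGraph T : Set (WithLp 2 (E × E))) :=
  hT.preimage (WithLp.prod_continuous_ofLp 2 E E)

theorem coe_eq_image_hilbertGraph (T : Submodule ℂ (E × E)) :
    (T : Set (E × E)) = WithLp.ofLp '' (hilbertGraph T : Set (WithLp 2 (E × E))) :=
  (Set.image_preimage_eq _ (WithLp.linearEquiv 2 ℂ (E × E)).surjective).symm

theorem mem_adjRel_iff {J : E →L[ℂ] E} (hJ : IsFundSym J) (T : Submodule ℂ (E × E)) (q : E × E) :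
    q ∈ adjRel J T ↔ WithLp.toLp 2 (J q.2, -J q.1) ∈ (hilbertGraph T)ᗮ := by
  have key : ∀ p : E × E, kip J q.2 p.1 - kip J q.1 p.2 =
      starRingEnd ℂ ⟪WithLp.toLp 2 p, WithLp.toLp 2 (J q.2, -J q.1)⟫_ℂ := by
    intro p
    simp only [kip, WithLp.prod_inner_apply, inner_neg_right, map_add, map_neg, inner_conj_symm,
      ← hJ.symm]
    ring
  rw [Submodule.mem_orthogonal]
  constructor
  · intro hq u hu
    have := key u.ofLp
    rwa [sub_eq_zero.mpr (hq u.ofLp hu), WithLp.toLp_ofLp, eq_comm, map_eq_zero] at this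
  · intro h p hp
    rw [← sub_eq_zero, key, h _ hp, map_zero]

theorem adjRel_eq_image {J : E →L[ℂ] E} (hJ : IsFundSym J) (T : Submodule ℂ (E × E)) :
    adjRel J T = (fun u : WithLp 2 (E × E) => (-J u.snd, J u.fst)) ''
      ((hilbertGraph T)ᗮ : Set (WithLp 2 (E × E))) := by
  ext q
  rw [mem_adjRel_iff hJ]
  constructor
  · intro hq
    exact ⟨_, hq, by simp [hJ.invol]⟩
  · rintro ⟨u, hu, rfl⟩
    simp only [map_neg, hJ.invol, neg_neg]
    exact hu

def sndSubSmulFst (c : ℂ) : WithLp 2 (E × E) →L[ℂ] E :=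
  WithLp.sndL 2 ℂ E E - c • WithLp.fstL 2 ℂ E E

def fstAddSmulSnd (c : ℂ) : WithLp 2 (E × E) →L[ℂ] E :=
  WithLp.fstL 2 ℂ E E + c • WithLp.sndL 2 ℂ E E

@[simp]
theorem sndSubSmulFst_apply (c : ℂ) (u : WithLp 2 (E × E)) :
    sndSubSmulFst c u = u.snd - c • u.fst := rfl

@[simp]
theorem fstAddSmulSnd_apply (c : ℂ) (u : WithLp 2 (E × E)) :
    fstAddSmulSnd c u = u.fst + c • u.snd := rfl

theorem surjective_sndSubSmulFst (c : ℂ) : Surjective (sndSubSmulFst (E := E) c) :=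
  fun y => ⟨WithLp.toLp 2 (0, y), by simp⟩

theorem surjective_fstAddSmulSnd (c : ℂ) : Surjective (fstAddSmulSnd (E := E) c) :=
  fun x => ⟨WithLp.toLp 2 (x, 0), by simp⟩

theorem ker_fstAddSmulSnd (c : ℂ) :
    (fstAddSmulSnd (E := E) (starRingEnd ℂ c) : WithLp 2 (E × E) →ₗ[ℂ] E).ker =
      (sndSubSmulFst (E := E) c : WithLp 2 (E × E) →ₗ[ℂ] E).kerᗮ := by
  have key : ∀ u v : WithLp 2 (E × E), sndSubSmulFst c u = 0 →
      ⟪u, v⟫_ℂ = ⟪u.fst, fstAddSmulSnd (starRingEnd ℂ c) v⟫_ℂ := by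
    intro u v hu
    rw [sndSubSmulFst_apply, sub_eq_zero] at hu
    simp [inner_smul_left, hu]
  ext v
  simp only [LinearMap.mem_ker, coe_coe, Submodule.mem_orthogonal]
  refine ⟨fun hv u hu => by rw [key u v hu, hv, inner_zero_right], fun hv => ?_⟩
  have hw := key (WithLp.toLp 2 (fstAddSmulSnd (starRingEnd ℂ c) v,
    c • fstAddSmulSnd (starRingEnd ℂ c) v)) v (by simp)
  rw [hv _ (by simp)] at hw
  simpa using hw.symm

theorem isClosed_image_sndSubSmulFst_iff [CompleteSpace E] {V : Submodule ℂ (WithLp 2 (E × E))}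
    (hV : IsClosed (V : Set (WithLp 2 (E × E)))) (c : ℂ) :
    IsClosed (sndSubSmulFst c '' (V : Set (WithLp 2 (E × E)))) ↔
      IsClosed (fstAddSmulSnd (starRingEnd ℂ c) '' (Vᗮ : Set (WithLp 2 (E × E)))) :=
  isClosed_image_iff_isClosed_image_orthogonal V hV _
    ((surjective_sndSubSmulFst (E := E) c).range_eq ▸ isClosed_univ) _
    (surjective_fstAddSmulSnd _) (ker_fstAddSmulSnd c)

theorem ranSet_shiftRel_eq_image (T : Submodule ℂ (E × E)) (c : ℂ) :
    ranSet (shiftRel T c) = sndSubSmulFst c '' (hilbertGraph T : Set (WithLp 2 (E × E))) := by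
  rw [ranSet_shiftRel, coe_eq_image_hilbertGraph, Set.image_image]
  rfl

theorem ranSet_shiftRel_JRel_eq_image (J : E →L[ℂ] E) (T : Submodule ℂ (E × E)) (c : ℂ) :
    ranSet (shiftRel (JRel J T) c) =
      (fun u : WithLp 2 (E × E) => J u.snd - c • u.fst) ''
        (hilbertGraph T : Set (WithLp 2 (E × E))) := by
  rw [ranSet_shiftRel, JRel_eq_image, coe_eq_image_hilbertGraph, Set.image_image, Set.image_image]
  rfl

theorem ranSet_shiftRel_adjRel_eq_image {J : E →L[ℂ] E} (hJ : IsFundSym J)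
    (T : Submodule ℂ (E × E)) (c : ℂ) :
    ranSet (shiftRel (adjRel J T) c) =
      (J ∘L fstAddSmulSnd c) '' ((hilbertGraph T)ᗮ : Set (WithLp 2 (E × E))) := by
  rw [ranSet_shiftRel, adjRel_eq_image hJ, Set.image_image]
  congr! 1 with u
  simp [sub_neg_eq_add]

theorem ranSet_shiftRel_JRel_adjRel_eq_image {J : E →L[ℂ] E} (hJ : IsFundSym J)
    (T : Submodule ℂ (E × E)) (c : ℂ) :
    ranSet (shiftRel (JRel J (adjRel J T)) c) =
      (fun u : WithLp 2 (E × E) => u.fst + c • J u.snd) ''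
        ((hilbertGraph T)ᗮ : Set (WithLp 2 (E × E))) := by
  rw [ranSet_shiftRel, JRel_eq_image, adjRel_eq_image hJ, Set.image_image, Set.image_image]
  congr! 1 with u
  simp [hJ.invol, sub_neg_eq_add]

end Krein

theorem statement18_general (J : H →L[ℂ] H) (hJ : IsFundSym J)
    (T : Submodule ℂ (H × H))
    (hTclosed : IsClosed (T : Set (H × H)))
    (l : ℂ)
    (h1 : IsClosed (setSum (negSet J)
      (ranSet (shiftRel (JRel J (adjRel J (T : Set (H × H)))) ((starRingEnd ℂ) l))))) :
    (IsClosed (ranSet (shiftRel (T : Set (H × H)) l)) ↔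
      IsClosed (negSet J ∩ ranSet (shiftRel (adjRel J (T : Set (H × H))) ((starRingEnd ℂ) l)))) ∧
    (IsClosed (setSum (posSet J) (ranSet (shiftRel (JRel J (T : Set (H × H))) (-l)))) →
      (IsClosed (ranSet (shiftRel (T : Set (H × H)) l)) ↔
        IsClosed (posSet J ∩ ranSet (shiftRel (T : Set (H × H)) l)))) := by
  set G := hilbertGraph T
  have hG : IsClosed (G : Set (WithLp 2 (H × H))) := isClosed_hilbertGraph hTclosed
  have hR : IsClosed (ranSet (shiftRel (T : Set (H × H)) l)) ↔
      IsClosed (fstAddSmulSnd (starRingEnd ℂ l) '' (Gᗮ : Set (WithLp 2 (H × H)))) := by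
    rw [ranSet_shiftRel_eq_image]
    exact isClosed_image_sndSubSmulFst_iff hG l
  refine ⟨?_, fun h2 => ?_⟩
  · rw [setSum_eq_add_s18, ← coe_negSubspace, ranSet_shiftRel_JRel_adjRel_eq_image hJ,
      Submodule.add_image_eq_add_image _ (g := J ∘L fstAddSmulSnd (starRingEnd ℂ l))
        (fun u _ => by simpa using hJ.sub_map_mem_negSubspace u.fst)] at h1
    rw [hR, ranSet_shiftRel_adjRel_eq_image hJ, ← coe_negSubspace,
      ← isClosed_image_iff_isClosed_inter_of_isClosed_add _ (isClosed_negSubspace J) _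
        (Submodule.isClosed_orthogonal _) _ h1, coe_comp, Set.image_comp, hJ.isClosed_image_iff]
  · rw [setSum_eq_add_s18, ← coe_posSubspace, ranSet_shiftRel_JRel_eq_image,
      Submodule.add_image_eq_add_image _ (g := fun u => -sndSubSmulFst l u)
        (fun u _ => by
          convert hJ.add_map_mem_posSubspace u.snd using 1
          simp only [neg_smul, sub_neg_eq_add, sndSubSmulFst_apply, neg_sub]
          abel)] at h2
    have hneg : (fun u => -sndSubSmulFst l u) '' (G : Set (WithLp 2 (H × H))) =
        sndSubSmulFst l '' G := by
      rw [← Set.image_image (fun x : H => -x) (sndSubSmulFst l), Set.image_neg_eq_neg,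
        ← Set.image_neg, Submodule.neg_coe]
    rw [hneg] at h2
    rw [ranSet_shiftRel_eq_image, ← coe_posSubspace]
    exact isClosed_image_iff_isClosed_inter_of_isClosed_add _ (isClosed_posSubspace J) G hG _ h2

/-- Lemma 6.2: fix `λ ≠ 0` with `H⁻ + R_{JT^c − λ̄I}` closed. Then `R_{T−λI}` is closed
iff `H⁻ ∩ R_{T^c − λ̄I}` is closed; if also `H⁺ + R_{JT + λI}` is closed, then
`R_{T−λI}` is closed iff `H⁺ ∩ R_{T−λI}` is closed. -/
theorem statement18 (J : H →L[ℂ] H) (hJ : IsFundSym J)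
    (T : Submodule ℂ (H × H))
    (hTclosed : IsClosed (T : Set (H × H)))
    (l : ℂ) (hl0 : l ≠ 0)
    (h1 : IsClosed (setSum (negSet J)
      (ranSet (shiftRel (JRel J (adjRel J (T : Set (H × H)))) ((starRingEnd ℂ) l))))) :
    (IsClosed (ranSet (shiftRel (T : Set (H × H)) l)) ↔
      IsClosed (negSet J ∩ ranSet (shiftRel (adjRel J (T : Set (H × H))) ((starRingEnd ℂ) l)))) ∧
    (IsClosed (setSum (posSet J) (ranSet (shiftRel (JRel J (T : Set (H × H))) (-l)))) →
      (IsClosed (ranSet (shiftRel (T : Set (H × H)) l)) ↔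
        IsClosed (posSet J ∩ ranSet (shiftRel (T : Set (H × H)) l)))) :=
  statement18_general J hJ T hTclosed l h1
end
end
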